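/- arXiv:2506.20441 — 7 statements merged into one kernel-verified Lean document; each statement's English description precedes it below -/
import Mathlib

section
/- Let x₁ < x₂ be real numbers, set h = x₂ - x₁, and let f : ℝ → ℝ be twice continuously differentiable on [x₁, x₂]. Let p be the linear interpolant of f at x₁ and x₂, i.e. p(x) = ((x - x₁)/h)·f(x₂) - ((x - x₂)/h)·f(x₁). Then for every x ∈ [x₁, x₂] there exists ξ ∈ [x₁, x₂] such that f(x) - p(x) = (f''(ξ)/2)·(x - x₁)·(x - x₂). -/
open Set

/-- Pointwise error formula for linear (trapezoid) interpolation of a C² function: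
for every `x ∈ [x₁, x₂]` there is `ξ ∈ [x₁, x₂]` with
`f x - p x = (f''(ξ)/2) (x - x₁) (x - x₂)`, where `p` interpolates `f` at `x₁, x₂`. -/
theorem trapezoid_interpolation_error
    (x₁ x₂ : ℝ) (hx : x₁ < x₂) (f : ℝ → ℝ)
    (hf : ContDiffOn ℝ 2 f (Set.Icc x₁ x₂)) :
    ∀ x ∈ Set.Icc x₁ x₂, ∃ ξ ∈ Set.Icc x₁ x₂,
      f x - (((x - x₁) / (x₂ - x₁)) * f x₂ - ((x - x₂) / (x₂ - x₁)) * f x₁)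
        = (iteratedDerivWithin 2 f (Set.Icc x₁ x₂) ξ / 2) * (x - x₁) * (x - x₂) := by
  set s := Set.Icc x₁ x₂ with hsdef
  have hs : UniqueDiffOn ℝ s := uniqueDiffOn_Icc hx
  have hne : x₂ - x₁ ≠ 0 := sub_ne_zero.2 hx.ne'
  set f' := derivWithin f s with hf'def
  set f'' := derivWithin f' s with hf''def
  have hfd : DifferentiableOn ℝ f s := hf.differentiableOn (by norm_num)
  have hf'c1 : ContDiffOn ℝ 1 f' s := hf.derivWithin hs (by norm_num)
  have hf'd : DifferentiableOn ℝ f' s := hf'c1.differentiableOn (by norm_num)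
  have hf'cont : ContinuousOn f' s := hf'd.continuousOn
  have hfcont : ContinuousOn f s := hfd.continuousOn
  -- iterated deriv within equals f''
  have hiter : ∀ ξ ∈ s, iteratedDerivWithin 2 f s ξ = f'' ξ := by
    intro ξ hξ
    rw [iteratedDerivWithin_succ]
    apply derivWithin_congr
    · intro t ht; exact congrFun iteratedDerivWithin_one t
    · exact congrFun iteratedDerivWithin_one ξ
  -- derivatives at interior points
  have hfderiv : ∀ t ∈ Ioo x₁ x₂, HasDerivAt f (f' t) t := by
    intro t ht
    have h1 : s ∈ nhds t := Icc_mem_nhds ht.1 ht.2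
    exact ((hfd t (Ioo_subset_Icc_self ht)).hasDerivWithinAt).hasDerivAt h1
  have hf'deriv : ∀ t ∈ Ioo x₁ x₂, HasDerivAt f' (f'' t) t := by
    intro t ht
    have h1 : s ∈ nhds t := Icc_mem_nhds ht.1 ht.2
    exact ((hf'd t (Ioo_subset_Icc_self ht)).hasDerivWithinAt).hasDerivAt h1
  intro x hxmem
  rcases eq_or_lt_of_le hxmem.1 with h1 | h1
  · -- x = x₁
    refine ⟨x₁, left_mem_Icc.2 hx.le, ?_⟩
    subst h1
    field_simp
    ring
  rcases eq_or_lt_of_le hxmem.2 with h2 | h2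
  · -- x = x₂
    refine ⟨x₁, left_mem_Icc.2 hx.le, ?_⟩
    subst h2
    field_simp
    ring
  -- interior case
  set p : ℝ → ℝ := fun t => ((t - x₁) / (x₂ - x₁)) * f x₂ - ((t - x₂) / (x₂ - x₁)) * f x₁
    with hpdef
  set K : ℝ := (f x - p x) / ((x - x₁) * (x - x₂)) with hKdef
  have hxx1 : x - x₁ ≠ 0 := sub_ne_zero.2 h1.ne'
  have hxx2 : x - x₂ ≠ 0 := sub_ne_zero.2 h2.ne
  set g : ℝ → ℝ := fun t => f t - p t - K * (t - x₁) * (t - x₂) with hgdef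
  have hgx1 : g x₁ = 0 := by simp only [hgdef, hpdef]; field_simp; ring
  have hgx2 : g x₂ = 0 := by simp only [hgdef, hpdef]; field_simp; ring
  have hgx : g x = 0 := by
    simp only [hgdef, hKdef]
    field_simp
    ring
  set C : ℝ := (f x₂ - f x₁) / (x₂ - x₁) with hCdef
  set g' : ℝ → ℝ := fun t => f' t - C - K * (2 * t - x₁ - x₂) with hg'def
  have hpcont : ContinuousOn p s := by fun_prop
  have hgcont : ContinuousOn g s := by
    apply (hfcont.sub hpcont).sub
    fun_prop
  have hgderiv : ∀ t ∈ Ioo x₁ x₂, HasDerivAt g (g' t) t := by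
    intro t ht
    have hp : HasDerivAt p C t := by
      have : HasDerivAt (fun t : ℝ => ((t - x₁) / (x₂ - x₁)) * f x₂ -
          ((t - x₂) / (x₂ - x₁)) * f x₁)
          ((1 / (x₂ - x₁)) * f x₂ - (1 / (x₂ - x₁)) * f x₁) t := by
        apply HasDerivAt.sub
        · exact (((hasDerivAt_id t).sub_const x₁).div_const _).mul_const _
        · exact (((hasDerivAt_id t).sub_const x₂).div_const _).mul_const _
      convert this using 1
      rw [hCdef]; field_simp
    have hq : HasDerivAt (fun t => K * (t - x₁) * (t - x₂)) (K * (2 * t - x₁ - x₂)) t := by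
      have : HasDerivAt (fun t : ℝ => K * (t - x₁) * (t - x₂))
          (K * 1 * (t - x₂) + K * (t - x₁) * 1) t := by
        exact (((hasDerivAt_id t).sub_const x₁).const_mul K).mul
          ((hasDerivAt_id t).sub_const x₂)
      convert this using 1; ring
    exact ((hfderiv t ht).sub hp).sub hq
  -- Rolle on [x₁, x] and [x, x₂]
  obtain ⟨c₁, hc₁, hgc₁⟩ := exists_hasDerivAt_eq_zero h1
    (hgcont.mono (Icc_subset_Icc le_rfl hxmem.2)) (hgx1.trans hgx.symm)
    (fun t ht => hgderiv t ⟨ht.1, ht.2.trans h2⟩)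
  obtain ⟨c₂, hc₂, hgc₂⟩ := exists_hasDerivAt_eq_zero h2
    (hgcont.mono (Icc_subset_Icc hxmem.1 le_rfl)) (hgx.trans hgx2.symm)
    (fun t ht => hgderiv t ⟨h1.trans ht.1, ht.2⟩)
  have hc12 : c₁ < c₂ := hc₁.2.trans hc₂.1
  have hc₁s : c₁ ∈ Ioo x₁ x₂ := ⟨hc₁.1, hc₁.2.trans h2⟩
  have hc₂s : c₂ ∈ Ioo x₁ x₂ := ⟨h1.trans hc₂.1, hc₂.2⟩
  -- Rolle on [c₁, c₂] for g'
  have hg'cont : ContinuousOn g' (Icc c₁ c₂) := by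
    apply ContinuousOn.sub
    apply ContinuousOn.sub
    · exact hf'cont.mono (Icc_subset_Icc hc₁s.1.le hc₂s.2.le)
    · fun_prop
    · fun_prop
  have hg'deriv : ∀ t ∈ Ioo c₁ c₂, HasDerivAt g' (f'' t - 2 * K) t := by
    intro t ht
    have hts : t ∈ Ioo x₁ x₂ := ⟨hc₁s.1.trans ht.1, ht.2.trans hc₂s.2⟩
    have h2' : HasDerivAt (fun t : ℝ => K * (2 * t - x₁ - x₂)) (2 * K) t := by
      have : HasDerivAt (fun t : ℝ => K * (2 * t - x₁ - x₂)) (K * (2 * 1)) t :=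
        (((hasDerivAt_id t).const_mul 2).sub_const _).sub_const _ |>.const_mul K
      convert this using 1; ring
    have := ((hf'deriv t hts).sub_const C).sub h2'
    exact this
  obtain ⟨ξ, hξmem, hξ⟩ := exists_hasDerivAt_eq_zero hc12 hg'cont (hgc₁.trans hgc₂.symm)
    hg'deriv
  have hξs : ξ ∈ s := Icc_subset_Icc hc₁s.1.le hc₂s.2.le (Ioo_subset_Icc_self hξmem)
  refine ⟨ξ, hξs, ?_⟩
  rw [hiter ξ hξs]
  have hK2 : f'' ξ = 2 * K := by linarith [sub_eq_zero.mp (by linarith [hξ] : f'' ξ - 2 * K = 0)]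
  rw [hK2]
  have : f x - p x = K * ((x - x₁) * (x - x₂)) := by
    rw [hKdef]; field_simp
  simp only [hpdef] at this
  rw [this]; ring
end

section
/- Let a < b be real numbers, N ≥ 1 a natural number, h = (b - a)/N, and xᵢ = a + i·h for 0 ≤ i ≤ N. Let f : ℝ → ℝ be twice continuously differentiable on [a, b]. Then there exists ξ ∈ [a, b] such that ∫_a^b f(x) dx - ∑_{i=1}^{N} (h/2)·(f(x_{i-1}) + f(xᵢ)) = -(1/12)·(b - a)·h²·f''(ξ). -/
open Set intervalIntegral

/-- Single-interval trapezoid error as integral of kernel times second derivative. -/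
lemma trap_single (a b : ℝ) (f f₁ f₂ : ℝ → ℝ)
    (hc : ContinuousOn f (Set.Icc a b)) (hc1 : ContinuousOn f₁ (Set.Icc a b))
    (hc2 : ContinuousOn f₂ (Set.Icc a b))
    (hd1 : ∀ x ∈ Set.Ioo a b, HasDerivAt f (f₁ x) x)
    (hd2 : ∀ x ∈ Set.Ioo a b, HasDerivAt f₁ (f₂ x) x)
    (c d : ℝ) (hac : a ≤ c) (hcd : c ≤ d) (hdb : d ≤ b) :
    (∫ x in c..d, f x) - ((d - c) / 2) * (f c + f d)
      = -∫ x in c..d, (x - c) * (d - x) / 2 * f₂ x := by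
  have hsub : Set.Icc c d ⊆ Set.Icc a b := Set.Icc_subset_Icc hac hdb
  have huIcc : Set.uIcc c d = Set.Icc c d := Set.uIcc_of_le hcd
  set F : ℝ → ℝ := fun x => (x - c) * (d - x) / 2 * f₁ x - (c + d - 2 * x) / 2 * f x with hF
  have hFcont : ContinuousOn F (Set.Icc c d) := by
    apply ContinuousOn.sub
    · exact (((continuousOn_id.sub continuousOn_const).mul
        (continuousOn_const.sub continuousOn_id)).div_const 2).mul (hc1.mono hsub)
    · exact ((continuousOn_const.sub (continuousOn_const.mul continuousOn_id)).div_const 2).mul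
        (hc.mono hsub)
  have hFderiv : ∀ x ∈ Set.Ioo c d, HasDerivAt F ((x - c) * (d - x) / 2 * f₂ x + f x) x := by
    intro x hx
    have hxab : x ∈ Set.Ioo a b :=
      ⟨lt_of_le_of_lt hac hx.1, lt_of_lt_of_le hx.2 hdb⟩
    have hK : HasDerivAt (fun y : ℝ => (y - c) * (d - y) / 2) ((c + d - 2 * x) / 2) x := by
      have := (((hasDerivAt_id x).sub_const c).mul
        ((hasDerivAt_const x d).sub (hasDerivAt_id x))).div_const 2
      refine this.congr_deriv ?_; simp; try ring
    have hK' : HasDerivAt (fun y : ℝ => (c + d - 2 * y) / 2) (-1) x := by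
      have := (((hasDerivAt_const x (c + d)).sub
        ((hasDerivAt_id x).const_mul 2)).div_const 2)
      refine this.congr_deriv ?_; simp; try ring
    have := (hK.mul (hd2 x hxab)).sub (hK'.mul (hd1 x hxab))
    refine this.congr_deriv ?_; simp; try ring
  set g : ℝ → ℝ := fun x => (x - c) * (d - x) / 2 * f₂ x + f x with hg
  have hKcont : ContinuousOn (fun x => (x - c) * (d - x) / 2 * f₂ x) (Set.Icc c d) :=
    (((continuousOn_id.sub continuousOn_const).mul
        (continuousOn_const.sub continuousOn_id)).div_const 2).mul (hc2.mono hsub)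
  have hKint : IntervalIntegrable (fun x => (x - c) * (d - x) / 2 * f₂ x)
      MeasureTheory.volume c d := (huIcc ▸ hKcont).intervalIntegrable
  have hfint : IntervalIntegrable f MeasureTheory.volume c d :=
    (huIcc ▸ (hc.mono hsub)).intervalIntegrable
  have hgint : IntervalIntegrable g MeasureTheory.volume c d := hKint.add hfint
  have key : ∫ x in c..d, g x = F d - F c :=
    integral_eq_sub_of_hasDeriv_right_of_le hcd hFcont
      (fun x hx => (hFderiv x hx).hasDerivWithinAt) hgint
  have hsplit : ∫ x in c..d, g x
      = (∫ x in c..d, (x - c) * (d - x) / 2 * f₂ x) + ∫ x in c..d, f x :=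
    integral_add hKint hfint
  have hFd : F d = (d - c) / 2 * f d := by simp only [hF]; ring
  have hFc : F c = -((d - c) / 2 * f c) := by simp only [hF]; ring
  rw [hsplit, hFd, hFc] at key
  linarith [key]

lemma kernel_integral (c d : ℝ) :
    ∫ x in c..d, (x - c) * (d - x) / 2 = (d - c) ^ 3 / 12 := by
  have h : ∀ x ∈ Set.uIcc c d,
      HasDerivAt (fun y => (d - c) * (y - c) ^ 2 / 4 - (y - c) ^ 3 / 6)
        ((x - c) * (d - x) / 2) x := by
    intro x _
    have h2 : HasDerivAt (fun y : ℝ => (y - c) ^ 2) (2 * (x - c)) x := by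
      have := ((hasDerivAt_id x).sub_const c).pow 2
      refine this.congr_deriv ?_; simp
    have h3 : HasDerivAt (fun y : ℝ => (y - c) ^ 3) (3 * (x - c) ^ 2) x := by
      have := ((hasDerivAt_id x).sub_const c).pow 3
      refine this.congr_deriv ?_; simp
    have := ((h2.const_mul (d - c)).div_const 4).sub (h3.div_const 6)
    refine this.congr_deriv ?_; ring
  have hint : IntervalIntegrable (fun x => (x - c) * (d - x) / 2)
      MeasureTheory.volume c d := by
    apply ContinuousOn.intervalIntegrable
    exact ((continuousOn_id.sub continuousOn_const).mul
      (continuousOn_const.sub continuousOn_id)).div_const 2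
  have := integral_eq_sub_of_hasDerivAt h hint
  rw [this]; ring

/-- interior first and second derivatives agree with within-versions -/
lemma interior_derivs (a b : ℝ) (hab : a < b) (f : ℝ → ℝ)
    (hf : ContDiffOn ℝ 2 f (Set.Icc a b)) (x : ℝ) (hx : x ∈ Set.Ioo a b) :
    HasDerivAt f (derivWithin f (Set.Icc a b) x) x ∧
    HasDerivAt (derivWithin f (Set.Icc a b)) (iteratedDerivWithin 2 f (Set.Icc a b) x) x := by
  have hmem : Set.Icc a b ∈ nhds x := Icc_mem_nhds hx.1 hx.2
  have hud : UniqueDiffOn ℝ (Set.Icc a b) := uniqueDiffOn_Icc hab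
  have hfo : ContDiffOn ℝ 2 f (Set.Ioo a b) := hf.mono Set.Ioo_subset_Icc_self
  have hdo : ContDiffOn ℝ 1 (deriv f) (Set.Ioo a b) :=
    hfo.deriv_of_isOpen isOpen_Ioo (by norm_num)
  have heq : derivWithin f (Set.Icc a b) =ᶠ[nhds x] deriv f := by
    filter_upwards [isOpen_Ioo.mem_nhds hx] with y hy
    exact derivWithin_of_mem_nhds (Icc_mem_nhds hy.1 hy.2)
  have hdf : HasDerivAt f (deriv f x) x := by
    have : DifferentiableAt ℝ f x :=
      ((hfo x hx).differentiableWithinAt (by norm_num)).differentiableAt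
        (isOpen_Ioo.mem_nhds hx)
    exact this.hasDerivAt
  have hdf2 : HasDerivAt (deriv f) (deriv (deriv f) x) x := by
    have : DifferentiableAt ℝ (deriv f) x :=
      ((hdo x hx).differentiableWithinAt (by norm_num)).differentiableAt
        (isOpen_Ioo.mem_nhds hx)
    exact this.hasDerivAt
  have h1 : derivWithin f (Set.Icc a b) x = deriv f x := derivWithin_of_mem_nhds hmem
  have h2 : iteratedDerivWithin 2 f (Set.Icc a b) x = deriv (deriv f) x := by
    rw [iteratedDerivWithin_succ]
    rw [derivWithin_of_mem_nhds hmem]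
    have : iteratedDerivWithin 1 f (Set.Icc a b) =ᶠ[nhds x] deriv f := by
      filter_upwards [isOpen_Ioo.mem_nhds hx] with y hy
      rw [iteratedDerivWithin_one]
      exact derivWithin_of_mem_nhds (Icc_mem_nhds hy.1 hy.2)
    exact this.deriv_eq
  constructor
  · rw [h1]; exact hdf
  · rw [h2]
    exact hdf2.congr_of_eventuallyEq <| by
      filter_upwards [isOpen_Ioo.mem_nhds hx] with y hy
      exact derivWithin_of_mem_nhds (Icc_mem_nhds hy.1 hy.2)

/-- Error of the composite trapezoid rule with `N` equal subintervals for a C²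
function on `[a, b]`: there exists `ξ ∈ [a, b]` with
`∫_a^b f - ∑ᵢ (h/2)(f x_{i-1} + f xᵢ) = -(1/12)(b - a) h² f''(ξ)`, where
`h = (b - a)/N` and `xᵢ = a + i h`. -/
theorem composite_trapezoid_error
    (a b : ℝ) (hab : a < b) (N : ℕ) (hN : 1 ≤ N) (f : ℝ → ℝ)
    (hf : ContDiffOn ℝ 2 f (Set.Icc a b)) :
    ∃ ξ ∈ Set.Icc a b,
      (∫ x in a..b, f x)
        - ∑ i ∈ Finset.range N,
            ((b - a) / N / 2) *
              (f (a + i * ((b - a) / N)) + f (a + (i + 1) * ((b - a) / N)))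
        = -(1 / 12) * (b - a) * ((b - a) / N) ^ 2
            * iteratedDerivWithin 2 f (Set.Icc a b) ξ := by
  have hN0 : (N : ℝ) ≠ 0 := Nat.cast_ne_zero.2 (by omega)
  set h : ℝ := (b - a) / N with hh_def
  have hh : 0 < h := div_pos (by linarith) (by positivity)
  set X : ℕ → ℝ := fun i => a + i * h with hX_def
  have hNh : (N : ℝ) * h = b - a := by rw [hh_def]; field_simp
  have hX0 : X 0 = a := by simp [hX_def]
  have hXN : X N = b := by simp [hX_def]; linarith [hNh]
  have hXa : ∀ i : ℕ, a ≤ X i := fun i => by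
    simp only [hX_def]; nlinarith [hh.le, Nat.cast_nonneg (α := ℝ) i]
  have hXb : ∀ i : ℕ, i ≤ N → X i ≤ b := fun i hi => by
    simp only [hX_def]
    have : (i : ℝ) ≤ (N : ℝ) := Nat.cast_le.2 hi
    nlinarith [hh.le]
  have hstep : ∀ i : ℕ, X (i + 1) - X i = h := fun i => by
    simp only [hX_def]; push_cast; ring
  have hXle : ∀ i : ℕ, X i ≤ X (i + 1) := fun i => by
    have := hstep i; linarith [hh.le]
  have hud : UniqueDiffOn ℝ (Set.Icc a b) := uniqueDiffOn_Icc hab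
  set f₁ : ℝ → ℝ := derivWithin f (Set.Icc a b) with hf₁
  set f₂ : ℝ → ℝ := iteratedDerivWithin 2 f (Set.Icc a b) with hf₂
  have hc : ContinuousOn f (Set.Icc a b) := hf.continuousOn
  have hc1 : ContinuousOn f₁ (Set.Icc a b) := hf.continuousOn_derivWithin hud (by norm_num)
  have hc2 : ContinuousOn f₂ (Set.Icc a b) :=
    hf.continuousOn_iteratedDerivWithin (by norm_num) hud
  have hd1 : ∀ x ∈ Set.Ioo a b, HasDerivAt f (f₁ x) x :=
    fun x hx => (interior_derivs a b hab f hf x hx).1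
  have hd2 : ∀ x ∈ Set.Ioo a b, HasDerivAt f₁ (f₂ x) x :=
    fun x hx => (interior_derivs a b hab f hf x hx).2
  -- split the integral
  have hsubI : ∀ i : ℕ, i < N → Set.uIcc (X i) (X (i + 1)) ⊆ Set.Icc a b := by
    intro i hi
    rw [Set.uIcc_of_le (hXle i)]
    exact Set.Icc_subset_Icc (hXa i) (hXb (i + 1) (by omega))
  have hint : ∀ k < N, IntervalIntegrable f MeasureTheory.volume (X k) (X (k + 1)) :=
    fun k hk => (hc.mono (hsubI k hk)).intervalIntegrable
  have hsum : ∑ k ∈ Finset.range N, ∫ x in X k..X (k + 1), f x = ∫ x in a..b, f x := by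
    rw [← hX0, ← hXN]
    exact intervalIntegral.sum_integral_adjacent_intervals hint
  -- per-interval error
  set I : ℕ → ℝ := fun i => ∫ x in X i..X (i + 1), (x - X i) * (X (i + 1) - x) / 2 * f₂ x
    with hI_def
  have hpiece : ∀ i : ℕ, i < N →
      (∫ x in X i..X (i + 1), f x) - (h / 2) * (f (X i) + f (X (i + 1))) = -I i := by
    intro i hi
    have := trap_single a b f f₁ f₂ hc hc1 hc2 hd1 hd2 (X i) (X (i + 1))
      (hXa i) (hXle i) (hXb (i + 1) (by omega))
    rw [hstep i] at this
    exact this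
  -- total error equals -∑ I
  have htot : (∫ x in a..b, f x)
      - ∑ i ∈ Finset.range N,
          ((b - a) / N / 2) * (f (a + i * ((b - a) / N)) + f (a + (i + 1) * ((b - a) / N)))
      = -∑ i ∈ Finset.range N, I i := by
    rw [← hsum, ← Finset.sum_sub_distrib, ← Finset.sum_neg_distrib]
    apply Finset.sum_congr rfl
    intro i hi
    have hi' := Finset.mem_range.1 hi
    have := hpiece i hi'
    have hXi : X i = a + i * ((b - a) / N) := rfl
    have hXi1 : X (i + 1) = a + (i + 1 : ℝ) * ((b - a) / N) := by
      simp only [hX_def]; push_cast; ring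
    rw [← hXi1, ← hh_def]
    linarith [this]
  -- min and max of f₂
  obtain ⟨u, hu, humin⟩ := isCompact_Icc.exists_isMinOn (Set.nonempty_Icc.2 hab.le) hc2
  obtain ⟨v, hv, hvmax⟩ := isCompact_Icc.exists_isMaxOn (Set.nonempty_Icc.2 hab.le) hc2
  set m : ℝ := f₂ u with hm
  set M : ℝ := f₂ v with hM
  -- bounds on each I i
  have hKint : ∀ i : ℕ, i < N → IntervalIntegrable
      (fun x => (x - X i) * (X (i + 1) - x) / 2 * f₂ x) MeasureTheory.volume (X i) (X (i+1)) :=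
    fun i hi => ((((continuousOn_id.sub continuousOn_const).mul
      (continuousOn_const.sub continuousOn_id)).div_const 2).mul
      (hc2.mono (hsubI i hi))).intervalIntegrable
  have hKcint : ∀ (c : ℝ) (i : ℕ), IntervalIntegrable
      (fun x => (x - X i) * (X (i + 1) - x) / 2 * c) MeasureTheory.volume (X i) (X (i+1)) :=
    fun c i => ((((continuousOn_id.sub continuousOn_const).mul
      (continuousOn_const.sub continuousOn_id)).div_const 2).mul
      continuousOn_const).intervalIntegrable
  have hKc : ∀ (c : ℝ) (i : ℕ),
      (∫ x in X i..X (i+1), (x - X i) * (X (i + 1) - x) / 2 * c) = h ^ 3 / 12 * c := by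
    intro c i
    rw [intervalIntegral.integral_mul_const, kernel_integral, hstep i]
  have hIlow : ∀ i : ℕ, i < N → h ^ 3 / 12 * m ≤ I i := by
    intro i hi
    rw [← hKc m i]
    apply intervalIntegral.integral_mono_on (hXle i) (hKcint m i) (hKint i hi)
    intro x hx
    have hxab : x ∈ Set.Icc a b := hsubI i hi (by rwa [Set.uIcc_of_le (hXle i)])
    have hK0 : 0 ≤ (x - X i) * (X (i + 1) - x) / 2 :=
      div_nonneg (mul_nonneg (by linarith [hx.1]) (by linarith [hx.2])) (by norm_num)
    exact mul_le_mul_of_nonneg_left (humin hxab) hK0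
  have hIhigh : ∀ i : ℕ, i < N → I i ≤ h ^ 3 / 12 * M := by
    intro i hi
    rw [← hKc M i]
    apply intervalIntegral.integral_mono_on (hXle i) (hKint i hi) (hKcint M i)
    intro x hx
    have hxab : x ∈ Set.Icc a b := hsubI i hi (by rwa [Set.uIcc_of_le (hXle i)])
    have hK0 : 0 ≤ (x - X i) * (X (i + 1) - x) / 2 :=
      div_nonneg (mul_nonneg (by linarith [hx.1]) (by linarith [hx.2])) (by norm_num)
    exact mul_le_mul_of_nonneg_left (hvmax hxab) hK0
  set S : ℝ := ∑ i ∈ Finset.range N, I i with hS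
  set C : ℝ := (b - a) * h ^ 2 / 12 with hC_def
  have hC : 0 < C := div_pos (mul_pos (by linarith) (pow_pos hh 2)) (by norm_num)
  have hNC : (N : ℝ) * (h ^ 3 / 12) = C := by
    rw [hC_def]; nlinarith [hNh]
  have hSlow : C * m ≤ S := by
    have := Finset.sum_le_sum (fun i hi => hIlow i (Finset.mem_range.1 hi))
    rw [Finset.sum_const, Finset.card_range] at this
    calc C * m = (N : ℝ) * (h ^ 3 / 12 * m) := by rw [← hNC]; ring
    _ ≤ S := by rw [hS]; simpa [nsmul_eq_mul] using this
  have hShigh : S ≤ C * M := by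
    have := Finset.sum_le_sum (fun i hi => hIhigh i (Finset.mem_range.1 hi))
    rw [Finset.sum_const, Finset.card_range] at this
    calc S ≤ (N : ℝ) * (h ^ 3 / 12 * M) := by rw [hS]; simpa [nsmul_eq_mul] using this
    _ = C * M := by rw [← hNC]; ring
  -- intermediate value
  have hVlow : m ≤ S / C := (le_div_iff₀ hC).2 (by linarith)
  have hVhigh : S / C ≤ M := (div_le_iff₀ hC).2 (by linarith)
  have hmM : m ≤ M := humin hv
  have hmem : S / C ∈ Set.uIcc (f₂ u) (f₂ v) := by
    rw [← hm, ← hM, Set.uIcc_of_le hmM]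
    exact ⟨hVlow, hVhigh⟩
  obtain ⟨ξ, hξ, hfξ⟩ := intermediate_value_uIcc
    (hc2.mono (Set.uIcc_subset_Icc hu hv)) hmem
  refine ⟨ξ, Set.uIcc_subset_Icc hu hv hξ, ?_⟩
  rw [htot, hfξ, hC_def]
  have hba : b - a ≠ 0 := sub_ne_zero.2 hab.ne'
  field_simp
end

section
/- Let a < b be real numbers, N ≥ 1 a natural number, h = (b - a)/N, and xᵢ = a + i·h for 0 ≤ i ≤ N. Let f : ℝ → ℝ be twice continuously differentiable on [a, b]. Then the total error of the composite trapezoid quadrature satisfies |∫_a^b f(x) dx - ∑_{i=1}^{N} (h/2)·(f(x_{i-1}) + f(xᵢ))| ≤ (1/12)·((b - a)³/N²)·max_{x ∈ [a,b]} |f''(x)|. -/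
open Set MeasureTheory intervalIntegral

/-- Single-interval trapezoid error bound. -/
lemma trap_single_s4 {f g g2 : ℝ → ℝ} {M : ℝ} {c d : ℝ} (hcd : c ≤ d)
    (hfc : ContinuousOn f (Icc c d)) (hgc : ContinuousOn g (Icc c d))
    (hfd : ∀ x ∈ Icc c d, HasDerivWithinAt f (g x) (Icc c d) x)
    (hgd : ∀ x ∈ Icc c d, HasDerivWithinAt g (g2 x) (Icc c d) x)
    (hM : ∀ x ∈ Icc c d, |g2 x| ≤ M) :
    |(∫ x in c..d, f x) - (d - c) / 2 * (f c + f d)| ≤ M / 12 * (d - c) ^ 3 := by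
  have hM0 : 0 ≤ M := le_trans (abs_nonneg _) (hM c ⟨le_rfl, hcd⟩)
  set L := d - c with hLdef
  have hL0 : 0 ≤ L := by simp only [hLdef]; linarith
  have hmem : ∀ t ∈ Icc (0:ℝ) L, c + t ∈ Icc c d := by
    intro t ht; exact ⟨by linarith [ht.1], by linarith [ht.2]⟩
  have hmapsTo : MapsTo (fun t : ℝ => c + t) (Icc 0 L) (Icc c d) := hmem
  have hcomp : ∀ (u u' : ℝ → ℝ), (∀ y ∈ Icc c d, HasDerivWithinAt u (u' y) (Icc c d) y) →
      ∀ x ∈ Icc (0:ℝ) L, HasDerivWithinAt (fun t => u (c + t)) (u' (c + x)) (Icc 0 L) x := by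
    intro u u' hu x hx
    have h1 : HasDerivWithinAt (fun t : ℝ => c + t) 1 (Icc 0 L) x := by
      simpa using (hasDerivWithinAt_id x (Icc (0:ℝ) L)).const_add c
    exact ((hu (c + x) (hmem x hx)).comp x h1 hmapsTo).congr_deriv (mul_one _)
  have hIcc_mem : ∀ x ∈ Ico (0:ℝ) L, Icc (0:ℝ) L ∈ nhdsWithin x (Ici x) := by
    intro x hx
    exact Filter.mem_of_superset (Icc_mem_nhdsGE_of_mem ⟨le_refl x, hx.2⟩)
      (Icc_subset_Icc hx.1 le_rfl)
  set ψ : ℝ → ℝ := fun t => (f (c + t) - f c) / 2 - t / 2 * g (c + t) with hψdef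
  set φ : ℝ → ℝ := fun t => (∫ x in c..(c + t), f x) - t / 2 * (f c + f (c + t)) with hφdef
  -- derivative of ψ
  have hψd : ∀ x ∈ Icc (0:ℝ) L, HasDerivWithinAt ψ (-(x / 2) * g2 (c + x)) (Icc 0 L) x := by
    intro x hx
    have h1 := ((hcomp f g hfd x hx).sub_const (f c)).div_const 2
    have h2 := ((hasDerivWithinAt_id x (Icc (0:ℝ) L)).div_const 2).mul (hcomp g g2 hgd x hx)
    have h3 := h1.sub h2
    refine h3.congr_deriv ?_
    simp only [id_eq]
    ring
  -- continuity of ψ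
  have hcont_add : Continuous (fun t : ℝ => c + t) := by continuity
  have hψc : ContinuousOn ψ (Icc 0 L) := by
    apply ContinuousOn.sub
    · exact ((hfc.comp hcont_add.continuousOn hmapsTo).sub continuousOn_const).div_const 2
    · exact (continuousOn_id.div_const 2).mul (hgc.comp hcont_add.continuousOn hmapsTo)
  -- step 1 : |ψ x| ≤ M/4 * x^2
  have step1 : ∀ x ∈ Icc (0:ℝ) L, |ψ x| ≤ M / 4 * x ^ 2 := by
    have := image_norm_le_of_norm_deriv_right_le_deriv_boundary
      (f := ψ) (f' := fun x => -(x / 2) * g2 (c + x)) (a := 0) (b := L)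
      (B := fun t => M / 4 * t ^ 2) (B' := fun t => M / 2 * t)
      hψc
      (fun x hx => (hψd x (Ico_subset_Icc_self hx)).mono_of_mem_nhdsWithin (hIcc_mem x hx))
      (by simp [hψdef])
      (fun x => by
        have := (hasDerivAt_pow 2 x).const_mul (M / 4)
        refine this.congr_deriv ?_
        ring)
      (fun x hx => by
        rw [Real.norm_eq_abs, abs_mul, abs_neg, abs_div]
        rw [abs_of_nonneg hx.1, abs_of_nonneg (by norm_num : (0:ℝ) ≤ 2)]
        have hb := hM (c + x) (hmem x (Ico_subset_Icc_self hx))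
        calc x / 2 * |g2 (c + x)| ≤ x / 2 * M := by
              apply mul_le_mul_of_nonneg_left hb (by linarith [hx.1])
          _ = M / 2 * x := by ring)
    intro x hx
    simpa [Real.norm_eq_abs] using this hx
  -- derivative of φ on Ico
  have hintf : ∀ e ∈ Icc c d, IntervalIntegrable f volume c e := by
    intro e he
    apply ContinuousOn.intervalIntegrable
    rw [uIcc_of_le he.1]
    exact hfc.mono (Icc_subset_Icc le_rfl he.2)
  have hφd : ∀ x ∈ Ico (0:ℝ) L, HasDerivWithinAt φ (ψ x) (Ici x) x := by
    intro x hx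
    have hcx : c + x ∈ Icc c d := hmem x (Ico_subset_Icc_self hx)
    have hcxd : c + x < d := by have := hx.2; simp only [hLdef] at this; linarith
    have hIccd_mem : Icc c d ∈ nhdsWithin (c + x) (Ioi (c + x)) :=
      Filter.mem_of_superset (Icc_mem_nhdsGT_of_mem ⟨le_refl _, hcxd⟩)
        (Icc_subset_Icc hcx.1 le_rfl)
    -- FTC part
    have hFTC : HasDerivWithinAt (fun u => ∫ y in c..u, f y) (f (c + x)) (Ici (c + x)) (c + x) := by
      apply integral_hasDerivWithinAt_right (hintf (c + x) hcx)
      · exact ⟨Icc c d, hIccd_mem, (hfc.mono (Icc_subset_Icc le_rfl le_rfl)).aestronglyMeasurable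
          measurableSet_Icc⟩
      · exact (hfc (c + x) hcx).mono_of_mem_nhdsWithin hIccd_mem
    have h1inner : HasDerivWithinAt (fun t : ℝ => c + t) 1 (Ici x) x := by
      simpa using (hasDerivWithinAt_id x (Ici x)).const_add c
    have hmaps2 : MapsTo (fun t : ℝ => c + t) (Ici x) (Ici (c + x)) := by
      intro t ht; simpa using (by linarith [mem_Ici.mp ht] : c + x ≤ c + t)
    have hterm1 : HasDerivWithinAt (fun t => ∫ y in c..(c + t), f y) (f (c + x)) (Ici x) x := by
      exact (hFTC.comp x h1inner hmaps2).congr_deriv (mul_one _)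
    have hterm2 : HasDerivWithinAt (fun t => t / 2 * (f c + f (c + t)))
        (1 / 2 * (f c + f (c + x)) + x / 2 * g (c + x)) (Ici x) x := by
      have h2 := ((hasDerivWithinAt_id x (Icc (0:ℝ) L)).div_const 2).mul
        ((hasDerivWithinAt_const x (Icc (0:ℝ) L) (f c)).add
          (hcomp f g hfd x (Ico_subset_Icc_self hx)))
      have h3 := h2.mono_of_mem_nhdsWithin (hIcc_mem x hx)
      refine h3.congr_deriv ?_
      simp only [id_eq, Pi.add_apply]
      ring
    have h4 := hterm1.sub hterm2
    refine h4.congr_deriv ?_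
    simp only [hψdef]
    ring
  -- continuity of φ
  have hφc : ContinuousOn φ (Icc 0 L) := by
    apply ContinuousOn.sub
    · have hprim : ContinuousOn (fun e => ∫ y in c..e, f y) (Icc c d) := by
        have := continuousOn_primitive_interval'
          (μ := volume) (b₁ := c) (b₂ := d) (a := c) (hintf d ⟨hcd, le_rfl⟩) left_mem_uIcc
        rwa [uIcc_of_le hcd] at this
      exact hprim.comp hcont_add.continuousOn hmapsTo
    · exact (continuousOn_id.div_const 2).mul
        (continuousOn_const.add (hfc.comp hcont_add.continuousOn hmapsTo))
  -- step 2 : |φ x| ≤ M/12 * x^3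
  have step2 : ∀ x ∈ Icc (0:ℝ) L, |φ x| ≤ M / 12 * x ^ 3 := by
    have := image_norm_le_of_norm_deriv_right_le_deriv_boundary
      (f := φ) (f' := ψ) (a := 0) (b := L)
      (B := fun t => M / 12 * t ^ 3) (B' := fun t => M / 4 * t ^ 2)
      hφc hφd
      (by simp [hφdef, intervalIntegral.integral_same])
      (fun x => by
        have := (hasDerivAt_pow 3 x).const_mul (M / 12)
        refine this.congr_deriv ?_
        ring)
      (fun x hx => by
        rw [Real.norm_eq_abs]
        exact step1 x (Ico_subset_Icc_self hx))
    intro x hx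
    simpa [Real.norm_eq_abs] using this hx
  -- conclude
  have hfin := step2 L ⟨hL0, le_rfl⟩
  have hcL : c + L = d := by simp only [hLdef]; ring
  simp only [hφdef, hcL] at hfin
  calc |(∫ x in c..d, f x) - (d - c) / 2 * (f c + f d)|
      = |(∫ x in c..d, f x) - L / 2 * (f c + f d)| := by rw [hLdef]
    _ ≤ M / 12 * L ^ 3 := hfin
    _ = M / 12 * (d - c) ^ 3 := by rw [hLdef]

/-- Uniform-grid error bound for the composite trapezoid rule: if `f` is C² on
`[a, b]` and `M = max_{x ∈ [a,b]} |f''(x)|`, then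
`|∫_a^b f - ∑ᵢ (h/2)(f x_{i-1} + f xᵢ)| ≤ (1/12) ((b - a)³/N²) M`, where
`h = (b - a)/N` and `xᵢ = a + i h`. -/
theorem composite_trapezoid_error_bound
    (a b : ℝ) (hab : a < b) (N : ℕ) (hN : 1 ≤ N) (f : ℝ → ℝ)
    (hf : ContDiffOn ℝ 2 f (Set.Icc a b)) (M : ℝ)
    (hM : IsGreatest ((fun x => |iteratedDerivWithin 2 f (Set.Icc a b) x|) ''
      Set.Icc a b) M) :
    |(∫ x in a..b, f x)
        - ∑ i ∈ Finset.range N,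
            ((b - a) / N / 2) *
              (f (a + i * ((b - a) / N)) + f (a + (i + 1) * ((b - a) / N)))|
      ≤ (1 / 12) * ((b - a) ^ 3 / (N : ℝ) ^ 2) * M := by
  have hN0 : (0:ℝ) < N := by exact_mod_cast Nat.lt_of_lt_of_le Nat.zero_lt_one hN
  set h := (b - a) / N with hhdef
  have hh0 : 0 < h := div_pos (by linarith) hN0
  set x : ℕ → ℝ := fun i => a + i * h with hxdef
  have hu : UniqueDiffOn ℝ (Icc a b) := uniqueDiffOn_Icc hab
  set g := derivWithin f (Icc a b) with hgdef
  set g2 := derivWithin g (Icc a b) with hg2def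
  have hfc : ContinuousOn f (Icc a b) := hf.continuousOn
  have hg1 : ContDiffOn ℝ 1 g (Icc a b) := hf.derivWithin hu (by norm_num)
  have hgc : ContinuousOn g (Icc a b) := hg1.continuousOn
  have hfd : ∀ y ∈ Icc a b, HasDerivWithinAt f (g y) (Icc a b) y :=
    fun y hy => (hf.differentiableOn two_ne_zero y hy).hasDerivWithinAt
  have hgd : ∀ y ∈ Icc a b, HasDerivWithinAt g (g2 y) (Icc a b) y :=
    fun y hy => (hg1.differentiableOn one_ne_zero y hy).hasDerivWithinAt
  have hiter : ∀ y ∈ Icc a b, iteratedDerivWithin 2 f (Icc a b) y = g2 y := by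
    intro y hy
    rw [iteratedDerivWithin_succ]
    apply derivWithin_congr
    · intro z hz
      exact congrFun iteratedDerivWithin_one z
    · exact congrFun iteratedDerivWithin_one y
  have hMb : ∀ y ∈ Icc a b, |g2 y| ≤ M := by
    intro y hy
    have hle := hM.2 ⟨y, hy, rfl⟩
    simp only at hle
    rwa [hiter y hy] at hle
  -- grid facts
  have hxa : ∀ i : ℕ, a ≤ x i := by
    intro i
    simp only [hxdef]
    nlinarith [Nat.cast_nonneg (α := ℝ) i, hh0.le]
  have hNh : a + N * h = b := by
    rw [hhdef]
    field_simp
    ring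
  have hxb : ∀ i : ℕ, i ≤ N → x i ≤ b := by
    intro i hi
    have : (i:ℝ) ≤ N := by exact_mod_cast hi
    simp only [hxdef]
    nlinarith
  have hstep : ∀ i : ℕ, x (i + 1) - x i = h := by
    intro i
    simp only [hxdef]
    push_cast
    ring
  have hxle : ∀ i : ℕ, x i ≤ x (i + 1) := by
    intro i; have := hstep i; linarith [hh0.le]
  have hsub : ∀ i : ℕ, i < N → Icc (x i) (x (i + 1)) ⊆ Icc a b := by
    intro i hi
    exact Icc_subset_Icc (hxa i) (hxb (i + 1) hi)
  -- integrability and splitting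
  have hint : ∀ i < N, IntervalIntegrable f volume (x i) (x (i + 1)) := by
    intro i hi
    apply ContinuousOn.intervalIntegrable
    rw [uIcc_of_le (hxle i)]
    exact hfc.mono (hsub i hi)
  have hsplit : ∑ i ∈ Finset.range N, ∫ t in x i..x (i + 1), f t = ∫ t in (x 0)..(x N), f t :=
    sum_integral_adjacent_intervals hint
  have hx0 : x 0 = a := by simp [hxdef]
  have hxN : x N = b := by simp only [hxdef]; linarith [hNh]
  rw [hx0, hxN] at hsplit
  -- per-interval bound
  have hbound : ∀ i < N,
      |(∫ t in x i..x (i + 1), f t) - h / 2 * (f (x i) + f (x (i + 1)))| ≤ M / 12 * h ^ 3 := by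
    intro i hi
    have hsubi := hsub i hi
    have := trap_single_s4 (hxle i)
      (hfc.mono hsubi) (hgc.mono hsubi)
      (fun y hy => (hfd y (hsubi hy)).mono hsubi)
      (fun y hy => (hgd y (hsubi hy)).mono hsubi)
      (fun y hy => hMb y (hsubi hy))
    rwa [hstep i] at this
  -- assemble
  have hsum_eq : ∑ i ∈ Finset.range N,
      ((b - a) / N / 2) * (f (a + i * ((b - a) / N)) + f (a + (i + 1) * ((b - a) / N)))
      = ∑ i ∈ Finset.range N, h / 2 * (f (x i) + f (x (i + 1))) := by
    apply Finset.sum_congr rfl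
    intro i _
    simp only [hxdef, hhdef]
    push_cast
    ring_nf
  rw [hsum_eq, ← hsplit, ← Finset.sum_sub_distrib]
  calc |∑ i ∈ Finset.range N,
        ((∫ t in x i..x (i + 1), f t) - h / 2 * (f (x i) + f (x (i + 1))))|
      ≤ ∑ i ∈ Finset.range N,
        |(∫ t in x i..x (i + 1), f t) - h / 2 * (f (x i) + f (x (i + 1)))| :=
        Finset.abs_sum_le_sum_abs _ _
    _ ≤ ∑ _i ∈ Finset.range N, M / 12 * h ^ 3 :=
        Finset.sum_le_sum (fun i hi => hbound i (Finset.mem_range.mp hi))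
    _ = N * (M / 12 * h ^ 3) := by
        simp [Finset.sum_const, Finset.card_range, nsmul_eq_mul]
    _ = (1 / 12) * ((b - a) ^ 3 / (N : ℝ) ^ 2) * M := by
        simp only [hhdef]
        field_simp
end

section
/- Let a < b be real numbers, k and N natural numbers with 1 ≤ k ≤ N, l = (b - a)/k, and let Iⱼ = [a + (j-1)·l, a + j·l] for 1 ≤ j ≤ k. Let f : ℝ → ℝ be twice continuously differentiable on [a, b], set Mⱼ = max_{x ∈ Iⱼ} |f''(x)|, assume Mⱼ > 0 for all j, set M = max_{1 ≤ j ≤ k} Mⱼ, and define nⱼ = ⌈N·√(Mⱼ)/∑_{p=1}^{k} √(M_p)⌉. Then ∑_{j=1}^{k} (l³/12)·(Mⱼ/nⱼ²) ≤ (1/12)·((b - a)³/N²)·M; that is, the error bound B_refined of the refined Hessian-based quadrature is at most the uniform-grid error bound B_unif with N subintervals. -/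
/-- The refined Hessian-based error bound is at most the uniform one:
with `l = (b - a)/k`, `Mⱼ = max_{Iⱼ} |f''|`, `M = maxⱼ Mⱼ` and
`nⱼ = ⌈N √(Mⱼ)/∑ₚ √(Mₚ)⌉`, one has
`∑ⱼ (l³/12)(Mⱼ/nⱼ²) ≤ (1/12)((b - a)³/N²) M`. -/
theorem refined_bound_le_uniform_bound
    (a b : ℝ) (hab : a < b) (k N : ℕ) (hk : 1 ≤ k) (hkN : k ≤ N)
    (f : ℝ → ℝ) (hf : ContDiffOn ℝ 2 f (Set.Icc a b))
    (M : Fin k → ℝ)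
    (hM : ∀ j : Fin k,
      IsGreatest ((fun x => |iteratedDerivWithin 2 f (Set.Icc a b) x|) ''
        Set.Icc (a + (j : ℝ) * ((b - a) / k)) (a + ((j : ℝ) + 1) * ((b - a) / k)))
        (M j))
    (hMpos : ∀ j, 0 < M j)
    (Mmax : ℝ) (hMmax : IsGreatest (Set.range M) Mmax) :
    ∑ j : Fin k, (((b - a) / k) ^ 3 / 12) *
        (M j / (⌈(N : ℝ) * Real.sqrt (M j) / ∑ p, Real.sqrt (M p)⌉₊ : ℝ) ^ 2)
      ≤ (1 / 12) * ((b - a) ^ 3 / (N : ℝ) ^ 2) * Mmax := by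
  have hk0 : (0:ℝ) < (k:ℝ) := by exact_mod_cast hk
  have hN0 : (0:ℝ) < (N:ℝ) := by exact_mod_cast lt_of_lt_of_le hk hkN
  have hba : (0:ℝ) < b - a := sub_pos.2 hab
  have hl : (0:ℝ) < (b - a) / k := by positivity
  set S := ∑ p, Real.sqrt (M p) with hS
  have hSpos : 0 < S :=
    Finset.sum_pos (fun p _ => Real.sqrt_pos.2 (hMpos p)) ⟨⟨0, hk⟩, Finset.mem_univ _⟩
  have hMmaxpos : 0 < Mmax :=
    lt_of_lt_of_le (hMpos ⟨0, hk⟩) (hMmax.2 ⟨⟨0, hk⟩, rfl⟩)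
  have hSle : S ≤ (k : ℝ) * Real.sqrt Mmax := by
    calc S ≤ ∑ _p : Fin k, Real.sqrt Mmax :=
          Finset.sum_le_sum (fun p _ => Real.sqrt_le_sqrt (hMmax.2 ⟨p, rfl⟩))
      _ = (k : ℝ) * Real.sqrt Mmax := by
          simp [Finset.sum_const, nsmul_eq_mul]
  have key : ∀ j : Fin k,
      M j / ((⌈(N : ℝ) * Real.sqrt (M j) / S⌉₊ : ℝ)) ^ 2 ≤ S ^ 2 / (N : ℝ) ^ 2 := by
    intro j
    set n : ℝ := (⌈(N : ℝ) * Real.sqrt (M j) / S⌉₊ : ℝ) with hn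
    have hx : 0 < (N : ℝ) * Real.sqrt (M j) / S := by
      have := Real.sqrt_pos.2 (hMpos j); positivity
    have hceil : (N : ℝ) * Real.sqrt (M j) / S ≤ n := Nat.le_ceil _
    have hnpos : 0 < n := lt_of_lt_of_le hx hceil
    rw [div_le_div_iff₀ (by positivity) (by positivity)]
    have h2 : ((N : ℝ) * Real.sqrt (M j) / S) ^ 2 ≤ n ^ 2 :=
      pow_le_pow_left₀ hx.le hceil 2
    have hsq : Real.sqrt (M j) ^ 2 = M j := Real.sq_sqrt (hMpos j).le
    have h3 : ((N : ℝ) * Real.sqrt (M j) / S) ^ 2 = (N : ℝ) ^ 2 * M j / S ^ 2 := by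
      rw [div_pow, mul_pow, hsq]
    rw [h3] at h2
    have h4 : (N : ℝ) ^ 2 * M j ≤ S ^ 2 * n ^ 2 := by
      have := (div_le_iff₀ (by positivity : (0:ℝ) < S ^ 2)).1 h2
      nlinarith [this, sq_nonneg S]
    linarith [h4]
  calc ∑ j : Fin k, (((b - a) / k) ^ 3 / 12) *
        (M j / (⌈(N : ℝ) * Real.sqrt (M j) / S⌉₊ : ℝ) ^ 2)
      ≤ ∑ _j : Fin k, (((b - a) / k) ^ 3 / 12) * (S ^ 2 / (N : ℝ) ^ 2) := by
        apply Finset.sum_le_sum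
        intro j _
        exact mul_le_mul_of_nonneg_left (key j) (by positivity)
    _ = (k : ℝ) * ((((b - a) / k) ^ 3 / 12) * (S ^ 2 / (N : ℝ) ^ 2)) := by
        simp [Finset.sum_const, nsmul_eq_mul]
    _ ≤ (1 / 12) * ((b - a) ^ 3 / (N : ℝ) ^ 2) * Mmax := by
        have hS2 : S ^ 2 ≤ (k : ℝ) ^ 2 * Mmax := by
          have h := mul_self_le_mul_self hSpos.le hSle
          have hs : Real.sqrt Mmax * Real.sqrt Mmax = Mmax :=
            Real.mul_self_sqrt hMmaxpos.le
          nlinarith [h, hs]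
        rw [div_pow]
        have expand : (k : ℝ) * ((b - a) ^ 3 / (k : ℝ) ^ 3 / 12 * (S ^ 2 / (N : ℝ) ^ 2))
            = (b - a) ^ 3 / (N : ℝ) ^ 2 / 12 * (S ^ 2 / (k : ℝ) ^ 2) := by
          field_simp
        rw [expand]
        have : S ^ 2 / (k : ℝ) ^ 2 ≤ Mmax := by
          rw [div_le_iff₀ (by positivity)]; nlinarith [hS2]
        calc (b - a) ^ 3 / (N : ℝ) ^ 2 / 12 * (S ^ 2 / (k : ℝ) ^ 2)
            ≤ (b - a) ^ 3 / (N : ℝ) ^ 2 / 12 * Mmax :=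
              mul_le_mul_of_nonneg_left this (by positivity)
          _ = (1 / 12) * ((b - a) ^ 3 / (N : ℝ) ^ 2) * Mmax := by ring
end

section
/- Let a < b be real numbers, k and N natural numbers with 1 ≤ k ≤ N, l = (b - a)/k, and let Iⱼ = [a + (j-1)·l, a + j·l] for 1 ≤ j ≤ k. Let f : ℝ → ℝ be twice continuously differentiable on [a, b], set Mⱼ = max_{x ∈ Iⱼ} |f''(x)|, assume Mⱼ > 0 for all j, set M = max_{1 ≤ j ≤ k} Mⱼ, and define nⱼ = ⌈N·√(Mⱼ)/∑_{p=1}^{k} √(M_p)⌉. Then the total error of the refined quadrature satisfies |∫_a^b f(x) dx - (sum of all trapezoid areas of the refined rule)| ≤ ∑_{j=1}^{k} (l³/12)·(Mⱼ/nⱼ²) ≤ (1/12)·((b - a)³/N²)·M. -/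
open Set MeasureTheory intervalIntegral

private lemma le_on_Icc_of_deriv {α β : ℝ} (hαβ : α ≤ β) {u u' : ℝ → ℝ}
    (hc : ContinuousOn u (Icc α β))
    (hd : ∀ t ∈ Ioo α β, HasDerivAt u (u' t) t)
    (h0 : ∀ t ∈ Ioo α β, 0 ≤ u' t) :
    ∀ t ∈ Icc α β, u α ≤ u t := by
  intro t ht
  have hmono : MonotoneOn u (Icc α β) := by
    apply monotoneOn_of_deriv_nonneg (convex_Icc α β) hc
    · intro x hx
      rw [interior_Icc] at hx
      exact (hd x hx).differentiableAt.differentiableWithinAt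
    · intro x hx
      rw [interior_Icc] at hx
      rw [(hd x hx).deriv]
      exact h0 x hx
  exact hmono (left_mem_Icc.2 hαβ) ht ht.1

private lemma trapezoid_single (a b : ℝ) (hab : a < b) (f : ℝ → ℝ)
    (hf : ContDiffOn ℝ 2 f (Set.Icc a b))
    {α β C : ℝ} (hαβ : α < β) (haa : a ≤ α) (hbb : β ≤ b)
    (hC : ∀ x ∈ Set.Icc α β, |iteratedDerivWithin 2 f (Set.Icc a b) x| ≤ C) :
    |(∫ x in α..β, f x) - (β - α) / 2 * (f α + f β)| ≤ C * (β - α) ^ 3 / 12 := by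
  set s : Set ℝ := Set.Icc a b with hs_def
  have hs : UniqueDiffOn ℝ s := uniqueDiffOn_Icc hab
  set g1 : ℝ → ℝ := derivWithin f s with hg1_def
  set g2 : ℝ → ℝ := iteratedDerivWithin 2 f s with hg2_def
  have hsub : Icc α β ⊆ s := Icc_subset_Icc haa hbb
  have hfc : ContinuousOn f s := hf.continuousOn
  have hf1 : ContDiffOn ℝ 1 g1 s := hf.derivWithin hs (by norm_num)
  have hg1c : ContinuousOn g1 s := hf1.continuousOn
  have hfd : DifferentiableOn ℝ f s := hf.differentiableOn two_ne_zero
  have hg1d : DifferentiableOn ℝ g1 s := hf1.differentiableOn one_ne_zero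
  have hC0 : 0 ≤ C := le_trans (abs_nonneg _) (hC α ⟨le_refl α, hαβ.le⟩)
  have hg2eq : ∀ x ∈ s, derivWithin g1 s x = g2 x := by
    intro x hx
    rw [hg2_def, iteratedDerivWithin_succ', iteratedDerivWithin_one]
  -- interior memberships
  have hIoo : ∀ t ∈ Ioo α β, t ∈ s ∧ s ∈ nhds t := by
    intro t ht
    have h1 : a < t := lt_of_le_of_lt haa ht.1
    have h2 : t < b := lt_of_lt_of_le ht.2 hbb
    exact ⟨⟨h1.le, h2.le⟩, Icc_mem_nhds h1 h2⟩
  have hft : ∀ t ∈ Ioo α β, HasDerivAt f (g1 t) t := fun t ht =>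
    ((hfd t (hIoo t ht).1).hasDerivWithinAt).hasDerivAt (hIoo t ht).2
  have hg1t : ∀ t ∈ Ioo α β, HasDerivAt g1 (g2 t) t := fun t ht =>
    (hg2eq t (hIoo t ht).1 ▸ ((hg1d t (hIoo t ht).1).hasDerivWithinAt)).hasDerivAt (hIoo t ht).2
  have hInt : ∀ t ∈ Icc α β, IntervalIntegrable f volume α t := by
    intro t ht
    apply ContinuousOn.intervalIntegrable
    rw [uIcc_of_le ht.1]
    exact hfc.mono (Icc_subset_Icc (le_trans haa le_rfl) (le_trans ht.2 hbb)) |>.mono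
      (Icc_subset_Icc le_rfl le_rfl)
  have hFt : ∀ t ∈ Ioo α β, HasDerivAt (fun u => ∫ x in α..u, f x) (f t) t := by
    intro t ht
    have hmeas := ContinuousOn.stronglyMeasurableAtFilter (μ := volume)
      isOpen_Ioo (hfc.mono Ioo_subset_Icc_self) t
      ⟨lt_of_le_of_lt haa ht.1, lt_of_lt_of_le ht.2 hbb⟩
    exact integral_hasDerivAt_right (hInt t (Ioo_subset_Icc_self ht))
      hmeas ((hfc t (hIoo t ht).1).continuousAt (hIoo t ht).2)
  set E : ℝ → ℝ := fun t => (∫ x in α..t, f x) - (t - α) / 2 * (f α + f t) with hE_def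
  set E1 : ℝ → ℝ := fun t => (f t - f α) / 2 - (t - α) / 2 * g1 t with hE1_def
  have hE' : ∀ t ∈ Ioo α β, HasDerivAt E (E1 t) t := by
    intro t ht
    have h2 : HasDerivAt (fun u => (u - α) / 2 * (f α + f u))
        (1 / 2 * (f α + f t) + (t - α) / 2 * (0 + g1 t)) t :=
      (((hasDerivAt_id t).sub_const α).div_const 2).mul
        ((hasDerivAt_const t (f α)).add (hft t ht))
    have := (hFt t ht).sub h2
    refine this.congr_deriv ?_
    simp only [hE1_def]; ring
  have hE1' : ∀ t ∈ Ioo α β, HasDerivAt E1 (-((t - α) / 2 * g2 t)) t := by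
    intro t ht
    have h1 : HasDerivAt (fun u => (f u - f α) / 2) (g1 t / 2) t :=
      ((hft t ht).sub_const (f α)).div_const 2
    have h2 : HasDerivAt (fun u => (u - α) / 2 * g1 u)
        (1 / 2 * g1 t + (t - α) / 2 * g2 t) t :=
      (((hasDerivAt_id t).sub_const α).div_const 2).mul (hg1t t ht)
    have := h1.sub h2
    refine this.congr_deriv ?_
    ring
  have hE1c : ContinuousOn E1 (Icc α β) := by
    apply ContinuousOn.sub
    · exact ((hfc.mono hsub).sub continuousOn_const).div_const 2
    · exact ((continuousOn_id.sub continuousOn_const).div_const 2).mul (hg1c.mono hsub)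
  have hEc : ContinuousOn E (Icc α β) := by
    apply ContinuousOn.sub
    · have hint : IntegrableOn f (uIcc α β) volume := by
        rw [uIcc_of_le hαβ.le]
        exact (hfc.mono hsub).integrableOn_Icc
      have := intervalIntegral.continuousOn_primitive_interval (μ := volume) hint
      rw [uIcc_of_le hαβ.le] at this
      exact this
    · exact (((continuousOn_id.sub continuousOn_const).div_const 2).mul
        ((continuousOn_const.add (hfc.mono hsub)) : ContinuousOn (fun u => f α + f u) (Icc α β)))
  have hg2bound : ∀ t ∈ Ioo α β, |g2 t| ≤ C := fun t ht => hC t (Ioo_subset_Icc_self ht)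
  -- inner bound : |E1 t| ≤ C (t-α)^2 / 4 on Icc α β
  have hE1bound : ∀ t ∈ Icc α β, |E1 t| ≤ C * (t - α) ^ 2 / 4 := by
    have hparab : ∀ t : ℝ, HasDerivAt (fun u => C * (u - α) ^ 2 / 4) (C * (t - α) / 2) t := by
      intro t
      have : HasDerivAt (fun u => C * (u - α) ^ 2 / 4)
          (C * ((2 : ℕ) * (t - α) ^ (2 - 1) * 1) / 4) t :=
        ((((hasDerivAt_id t).sub_const α).pow 2).const_mul C).div_const 4
      convert this using 1
      push_cast; ring
    have hparabc : ContinuousOn (fun u => C * (u - α) ^ 2 / 4) (Icc α β) := by fun_prop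
    intro t ht
    have h1 := le_on_Icc_of_deriv hαβ.le
      (hparabc.sub hE1c)
      (fun t ht => (hparab t).sub (hE1' t ht))
      (fun t ht => by
        have hb := abs_le.1 (hg2bound t ht)
        have ht0 : 0 ≤ t - α := by linarith [ht.1]
        nlinarith [hb.1, hb.2])
      t ht
    have h2 := le_on_Icc_of_deriv hαβ.le
      (hparabc.add hE1c)
      (fun t ht => (hparab t).add (hE1' t ht))
      (fun t ht => by
        have hb := abs_le.1 (hg2bound t ht)
        have ht0 : 0 ≤ t - α := by linarith [ht.1]
        nlinarith [hb.1, hb.2])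
      t ht
    have e1 : C * (α - α) ^ 2 / 4 - E1 α = 0 := by norm_num [hE1_def]
    have e2 : C * (α - α) ^ 2 / 4 + E1 α = 0 := by norm_num [hE1_def]
    simp only [Pi.sub_apply, Pi.add_apply] at h1 h2
    rw [abs_le]
    exact ⟨by linarith, by linarith⟩
  -- outer bound
  have hcube : ∀ t : ℝ, HasDerivAt (fun u => C * (u - α) ^ 3 / 12) (C * (t - α) ^ 2 / 4) t := by
    intro t
    have : HasDerivAt (fun u => C * (u - α) ^ 3 / 12)
        (C * ((3 : ℕ) * (t - α) ^ (3 - 1) * 1) / 12) t :=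
      ((((hasDerivAt_id t).sub_const α).pow 3).const_mul C).div_const 12
    convert this using 1
    push_cast; ring
  have hcubec : ContinuousOn (fun u => C * (u - α) ^ 3 / 12) (Icc α β) := by fun_prop
  have hEα0 : E α = 0 := by simp [hE_def]
  have h1 := le_on_Icc_of_deriv hαβ.le (hcubec.sub hEc)
    (fun t ht => (hcube t).sub (hE' t ht))
    (fun t ht => by
      have := hE1bound t (Ioo_subset_Icc_self ht)
      have := abs_le.1 this
      linarith [this.2])
    β (right_mem_Icc.2 hαβ.le)
  have h2 := le_on_Icc_of_deriv hαβ.le (hcubec.add hEc)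
    (fun t ht => (hcube t).add (hE' t ht))
    (fun t ht => by
      have := abs_le.1 (hE1bound t (Ioo_subset_Icc_self ht))
      linarith [this.1])
    β (right_mem_Icc.2 hαβ.le)
  have e1 : C * (α - α) ^ 3 / 12 - E α = 0 := by norm_num [hEα0]
  have e2 : C * (α - α) ^ 3 / 12 + E α = 0 := by norm_num [hEα0]
  simp only [Pi.sub_apply, Pi.add_apply] at h1 h2
  have hgoal : |E β| ≤ C * (β - α) ^ 3 / 12 := abs_le.2 ⟨by linarith, by linarith⟩
  simpa only [hE_def] using hgoal

set_option maxHeartbeats 2000000 in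
/-- Total error of the refined Hessian-based quadrature: with `l = (b - a)/k`,
`Mⱼ = max_{Iⱼ} |f''|`, `M = maxⱼ Mⱼ`, `nⱼ = ⌈N √(Mⱼ)/∑ₚ √(Mₚ)⌉` and
`hⱼ = l/nⱼ`, the absolute error of the sum of all trapezoid areas is at most
`∑ⱼ (l³/12)(Mⱼ/nⱼ²)`, which in turn is at most `(1/12)((b - a)³/N²) M`. -/
theorem refined_trapezoid_error_bound
    (a b : ℝ) (hab : a < b) (k N : ℕ) (hk : 1 ≤ k) (hkN : k ≤ N)
    (f : ℝ → ℝ) (hf : ContDiffOn ℝ 2 f (Set.Icc a b))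
    (M : Fin k → ℝ)
    (hM : ∀ j : Fin k,
      IsGreatest ((fun x => |iteratedDerivWithin 2 f (Set.Icc a b) x|) ''
        Set.Icc (a + (j : ℝ) * ((b - a) / k)) (a + ((j : ℝ) + 1) * ((b - a) / k)))
        (M j))
    (hMpos : ∀ j, 0 < M j)
    (Mmax : ℝ) (hMmax : IsGreatest (Set.range M) Mmax)
    (n : Fin k → ℕ)
    (hn : ∀ j : Fin k, n j = ⌈(N : ℝ) * Real.sqrt (M j) / ∑ p, Real.sqrt (M p)⌉₊) :
    |(∫ x in a..b, f x)
        - ∑ j : Fin k, ∑ i ∈ Finset.range (n j),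
            ((b - a) / k / (n j) / 2) *
              (f (a + (j : ℝ) * ((b - a) / k) + i * ((b - a) / k / (n j)))
                + f (a + (j : ℝ) * ((b - a) / k) + (i + 1) * ((b - a) / k / (n j))))|
        ≤ ∑ j : Fin k, (((b - a) / k) ^ 3 / 12) * (M j / (n j : ℝ) ^ 2) ∧
      ∑ j : Fin k, (((b - a) / k) ^ 3 / 12) * (M j / (n j : ℝ) ^ 2)
        ≤ (1 / 12) * ((b - a) ^ 3 / (N : ℝ) ^ 2) * Mmax := by
  have hk0 : (k : ℝ) ≠ 0 := Nat.cast_ne_zero.2 (by omega)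
  have hkpos : (0 : ℝ) < k := Nat.cast_pos.2 (by omega)
  have hNpos : (0 : ℝ) < N := Nat.cast_pos.2 (by omega)
  set l : ℝ := (b - a) / k with hl_def
  have hl : 0 < l := div_pos (sub_pos.2 hab) hkpos
  clear_value l
  have : Nonempty (Fin k) := ⟨⟨0, by omega⟩⟩
  have hS : 0 < ∑ p, Real.sqrt (M p) :=
    Finset.sum_pos (fun p _ => Real.sqrt_pos.2 (hMpos p)) Finset.univ_nonempty
  have hn1 : ∀ j, 0 < n j := by
    intro j
    rw [hn j]
    exact Nat.ceil_pos.2 (div_pos (mul_pos hNpos (Real.sqrt_pos.2 (hMpos j))) hS)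
  have hnR : ∀ j : Fin k, (0 : ℝ) < n j := fun j => Nat.cast_pos.2 (hn1 j)
  have hnh : ∀ j : Fin k, (n j : ℝ) * (l / n j) = l := fun j =>
    mul_div_cancel₀ l (hnR j).ne'
  have hh : ∀ j : Fin k, 0 < l / n j := fun j => div_pos hl (hnR j)
  have hint : ∀ c d : ℝ, a ≤ c → c ≤ d → d ≤ b → IntervalIntegrable f MeasureTheory.volume c d := by
    intro c d h1 h2 h3
    apply ContinuousOn.intervalIntegrable
    rw [Set.uIcc_of_le h2]
    exact hf.continuousOn.mono (Set.Icc_subset_Icc h1 h3)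
  have hklb : a + (k : ℝ) * l = b := by rw [hl_def]; field_simp; ring
  have hjfact : ∀ j : Fin k, (0 : ℝ) ≤ (j : ℝ) ∧ ((j : ℝ) + 1) * l ≤ (k : ℝ) * l := by
    intro j
    have hj1 : (j : ℝ) + 1 ≤ k := by exact_mod_cast j.isLt
    exact ⟨Nat.cast_nonneg _, mul_le_mul_of_nonneg_right hj1 hl.le⟩
  have hpt_le : ∀ (j : Fin k) (i : ℕ), i ≤ n j →
      a ≤ a + (j : ℝ) * l + i * (l / n j) ∧ a + (j : ℝ) * l + i * (l / n j) ≤ b := by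
    intro j i hi
    have hiR : (i : ℝ) ≤ n j := by exact_mod_cast hi
    have h1 : (i : ℝ) * (l / n j) ≤ l := by
      have := mul_le_mul_of_nonneg_right hiR (hh j).le
      rwa [hnh j] at this
    constructor
    · nlinarith [mul_nonneg (hjfact j).1 hl.le,
        mul_nonneg (Nat.cast_nonneg i : (0:ℝ) ≤ i) (hh j).le]
    · nlinarith [(hjfact j).2]
  -- the per-piece trapezoid bound
  have key : ∀ j : Fin k, ∀ i ∈ Finset.range (n j),
      |(∫ x in (a + (j : ℝ) * l + i * (l / n j))..(a + (j : ℝ) * l + ((i : ℝ) + 1) * (l / n j)), f x)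
          - (l / (n j) / 2) *
              (f (a + (j : ℝ) * l + i * (l / n j)) + f (a + (j : ℝ) * l + ((i : ℝ) + 1) * (l / n j)))|
        ≤ M j * (l / n j) ^ 3 / 12 := by
    intro j i hi
    have hi' : i + 1 ≤ n j := Finset.mem_range.1 hi
    have hβcast : a + (j : ℝ) * l + ((i : ℝ) + 1) * (l / n j)
        = a + (j : ℝ) * l + ((i + 1 : ℕ) : ℝ) * (l / n j) := by push_cast; ring
    have hαβ : a + (j : ℝ) * l + i * (l / n j) < a + (j : ℝ) * l + ((i : ℝ) + 1) * (l / n j) := by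
      nlinarith [hh j]
    have haα : a ≤ a + (j : ℝ) * l + i * (l / n j) := (hpt_le j i (by omega)).1
    have hβb : a + (j : ℝ) * l + ((i : ℝ) + 1) * (l / n j) ≤ b := by
      rw [hβcast]; exact (hpt_le j (i + 1) hi').2
    have hC : ∀ x ∈ Set.Icc (a + (j : ℝ) * l + i * (l / n j))
        (a + (j : ℝ) * l + ((i : ℝ) + 1) * (l / n j)),
        |iteratedDerivWithin 2 f (Set.Icc a b) x| ≤ M j := by
      intro x hx
      apply (hM j).2
      refine ⟨x, ?_, rfl⟩
      have h1 : (i : ℝ) * (l / n j) ≥ 0 :=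
        mul_nonneg (Nat.cast_nonneg i) (hh j).le
      have h2 : ((i : ℝ) + 1) * (l / n j) ≤ l := by
        have hiR : ((i : ℝ) + 1) ≤ n j := by exact_mod_cast hi'
        have := mul_le_mul_of_nonneg_right hiR (hh j).le
        rwa [hnh j] at this
      constructor
      · nlinarith [hx.1]
      · nlinarith [hx.2]
    have := trapezoid_single a b hab f hf hαβ haα hβb hC
    have hβα : a + (j : ℝ) * l + ((i : ℝ) + 1) * (l / n j) - (a + (j : ℝ) * l + i * (l / n j))
        = l / n j := by ring
    rw [hβα] at this
    exact this
  -- splitting the integral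
  have hinner : ∀ j : Fin k,
      (∫ x in (a + (j : ℝ) * l)..(a + ((j : ℝ) + 1) * l), f x)
        = ∑ i ∈ Finset.range (n j),
            ∫ x in (a + (j : ℝ) * l + i * (l / n j))..(a + (j : ℝ) * l + ((i : ℝ) + 1) * (l / n j)),
              f x := by
    intro j
    have hadj := intervalIntegral.sum_integral_adjacent_intervals
      (μ := MeasureTheory.volume) (a := fun i : ℕ => a + (j : ℝ) * l + i * (l / n j)) (n := n j)
      (by
        intro i hi
        apply hint
        · exact (hpt_le j i (le_of_lt hi)).1
        · push_cast; nlinarith [hh j]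
        · exact (hpt_le j (i + 1) hi).2)
    have h0 : a + (j : ℝ) * l + ((0 : ℕ) : ℝ) * (l / n j) = a + (j : ℝ) * l := by norm_num
    have hN' : a + (j : ℝ) * l + ((n j : ℕ) : ℝ) * (l / n j) = a + ((j : ℝ) + 1) * l := by
      rw [hnh j]; ring
    beta_reduce at hadj
    rw [h0, hN'] at hadj
    rw [← hadj]
    apply Finset.sum_congr rfl
    intro i _
    congr 1
    push_cast
    ring
  have houter := intervalIntegral.sum_integral_adjacent_intervals
    (μ := MeasureTheory.volume) (a := fun jn : ℕ => a + jn * l) (n := k)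
    (by
      intro jn hjn
      beta_reduce
      apply hint
      · nlinarith [mul_nonneg (Nat.cast_nonneg jn : (0:ℝ) ≤ jn) hl.le]
      · push_cast; nlinarith [hl]
      · have hj1 : (jn : ℝ) + 1 ≤ k := by exact_mod_cast hjn
        push_cast
        nlinarith [mul_le_mul_of_nonneg_right hj1 hl.le])
  have h0' : a + ((0 : ℕ) : ℝ) * l = a := by norm_num
  have hk' : a + ((k : ℕ) : ℝ) * l = b := hklb
  beta_reduce at houter
  rw [h0', hk'] at houter
  push_cast at houter
  have hfin : (∫ x in a..b, f x)
      = ∑ j : Fin k, ∫ x in (a + (j : ℝ) * l)..(a + ((j : ℝ) + 1) * l), f x := by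
    rw [← houter]
    exact (Fin.sum_univ_eq_sum_range
      (fun jn => ∫ x in (a + (jn : ℝ) * l)..(a + ((jn : ℝ) + 1) * l), f x) k).symm
  have hsplit : (∫ x in a..b, f x)
      = ∑ j : Fin k, ∑ i ∈ Finset.range (n j),
          ∫ x in (a + (j : ℝ) * l + i * (l / n j))..(a + (j : ℝ) * l + ((i : ℝ) + 1) * (l / n j)),
            f x :=
    hfin.trans (Finset.sum_congr rfl fun j _ => hinner j)
  constructor
  · -- part 1
    calc |(∫ x in a..b, f x)
          - ∑ j : Fin k, ∑ i ∈ Finset.range (n j),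
              (l / (n j) / 2) *
                (f (a + (j : ℝ) * l + i * (l / n j))
                  + f (a + (j : ℝ) * l + ((i : ℝ) + 1) * (l / n j)))|
        = |∑ j : Fin k, ∑ i ∈ Finset.range (n j),
            ((∫ x in (a + (j : ℝ) * l + i * (l / n j))..(a + (j : ℝ) * l + ((i : ℝ) + 1) * (l / n j)), f x)
              - (l / (n j) / 2) *
                (f (a + (j : ℝ) * l + i * (l / n j))
                  + f (a + (j : ℝ) * l + ((i : ℝ) + 1) * (l / n j))))| := by
          rw [hsplit, ← Finset.sum_sub_distrib]
          congr 1
          exact Finset.sum_congr rfl fun j _ => (Finset.sum_sub_distrib _ _).symm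
      _ ≤ ∑ j : Fin k, ∑ i ∈ Finset.range (n j), M j * (l / n j) ^ 3 / 12 := by
          refine (Finset.abs_sum_le_sum_abs _ _).trans (Finset.sum_le_sum fun j _ => ?_)
          refine (Finset.abs_sum_le_sum_abs _ _).trans (Finset.sum_le_sum fun i hi => ?_)
          exact key j i hi
      _ = ∑ j : Fin k, l ^ 3 / 12 * (M j / (n j : ℝ) ^ 2) := by
          refine Finset.sum_congr rfl fun j _ => ?_
          rw [Finset.sum_const, Finset.card_range, nsmul_eq_mul]
          have hne : ((n j : ℝ)) ≠ 0 := (hnR j).ne'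
          field_simp
  · -- part 2
    have hMmax0 : 0 < Mmax := by
      obtain ⟨j, hj⟩ := hMmax.1
      rw [← hj]; exact hMpos j
    have hS2 : (∑ p, Real.sqrt (M p)) ^ 2 ≤ (k : ℝ) ^ 2 * Mmax := by
      have hS_le : (∑ p, Real.sqrt (M p)) ≤ (k : ℝ) * Real.sqrt Mmax := by
        calc (∑ p, Real.sqrt (M p)) ≤ ∑ _p : Fin k, Real.sqrt Mmax :=
              Finset.sum_le_sum fun p _ => Real.sqrt_le_sqrt (hMmax.2 ⟨p, rfl⟩)
          _ = (k : ℝ) * Real.sqrt Mmax := by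
              rw [Finset.sum_const, Finset.card_univ, Fintype.card_fin, nsmul_eq_mul]
      nlinarith [Real.sq_sqrt hMmax0.le, Real.sqrt_nonneg Mmax, hS.le]
    have hterm : ∀ j : Fin k, M j / (n j : ℝ) ^ 2 ≤ (k : ℝ) ^ 2 * Mmax / (N : ℝ) ^ 2 := by
      intro j
      have h1 : (N : ℝ) * Real.sqrt (M j) / (∑ p, Real.sqrt (M p)) ≤ (n j : ℝ) := by
        rw [hn j]; exact Nat.le_ceil _
      have h1' : (N : ℝ) * Real.sqrt (M j) ≤ (∑ p, Real.sqrt (M p)) * (n j : ℝ) := by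
        rw [div_le_iff₀ hS] at h1
        linarith
      have h2 : ((N : ℝ) * Real.sqrt (M j)) ^ 2 ≤ ((∑ p, Real.sqrt (M p)) * (n j : ℝ)) ^ 2 := by
        have hpos : (0 : ℝ) ≤ (N : ℝ) * Real.sqrt (M j) :=
          mul_nonneg hNpos.le (Real.sqrt_nonneg _)
        exact pow_le_pow_left₀ hpos h1' 2
      have h3 : (N : ℝ) ^ 2 * M j ≤ (∑ p, Real.sqrt (M p)) ^ 2 * (n j : ℝ) ^ 2 := by
        have hsq := Real.sq_sqrt (hMpos j).le
        nlinarith [h2]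
      rw [div_le_div_iff₀ (pow_pos (hnR j) 2) (pow_pos hNpos 2)]
      nlinarith [h3, mul_le_mul_of_nonneg_right hS2 (sq_nonneg ((n j : ℝ)))]
    have hl3 : (0 : ℝ) ≤ l ^ 3 / 12 := div_nonneg (pow_nonneg hl.le 3) (by norm_num)
    calc ∑ j : Fin k, l ^ 3 / 12 * (M j / (n j : ℝ) ^ 2)
        ≤ ∑ _j : Fin k, l ^ 3 / 12 * ((k : ℝ) ^ 2 * Mmax / (N : ℝ) ^ 2) :=
          Finset.sum_le_sum fun j _ => mul_le_mul_of_nonneg_left (hterm j) hl3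
      _ = (k : ℝ) * (l ^ 3 / 12 * ((k : ℝ) ^ 2 * Mmax / (N : ℝ) ^ 2)) := by
          rw [Finset.sum_const, Finset.card_univ, Fintype.card_fin, nsmul_eq_mul]
      _ = 1 / 12 * ((b - a) ^ 3 / (N : ℝ) ^ 2) * Mmax := by
          rw [hl_def]
          field_simp
end

section
/- Let a < b be real numbers, k and N natural numbers with 1 ≤ k ≤ N, l = (b - a)/k, and let Iⱼ = [a + (j-1)·l, a + j·l] for 1 ≤ j ≤ k. Let f : ℝ → ℝ be twice continuously differentiable on [a, b], set Mⱼ = max_{x ∈ Iⱼ} |f''(x)|, assume Mⱼ > 0 for all j, set M = max_{1 ≤ j ≤ k} Mⱼ, and define nⱼ = ⌈N·√(Mⱼ)/∑_{p=1}^{k} √(M_p)⌉. If moreover there exists an index p with M_p < M (i.e. |f''| does not attain the same maximum on every subinterval), then the inequality is strict: ∑_{j=1}^{k} (l³/12)·(Mⱼ/nⱼ²) < (1/12)·((b - a)³/N²)·M. -/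
/-- Strict inequality between the refined and uniform bounds: if moreover some
`Mₚ < M` (i.e. `|f''|` does not attain the same maximum on every subinterval),
then `∑ⱼ (l³/12)(Mⱼ/nⱼ²) < (1/12)((b - a)³/N²) M`. -/
theorem refined_bound_lt_uniform_bound
    (a b : ℝ) (hab : a < b) (k N : ℕ) (hk : 1 ≤ k) (hkN : k ≤ N)
    (f : ℝ → ℝ) (hf : ContDiffOn ℝ 2 f (Set.Icc a b))
    (M : Fin k → ℝ)
    (hM : ∀ j : Fin k,
      IsGreatest ((fun x => |iteratedDerivWithin 2 f (Set.Icc a b) x|) ''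
        Set.Icc (a + (j : ℝ) * ((b - a) / k)) (a + ((j : ℝ) + 1) * ((b - a) / k)))
        (M j))
    (hMpos : ∀ j, 0 < M j)
    (Mmax : ℝ) (hMmax : IsGreatest (Set.range M) Mmax)
    (hvar : ∃ p : Fin k, M p < Mmax) :
    ∑ j : Fin k, (((b - a) / k) ^ 3 / 12) *
        (M j / (⌈(N : ℝ) * Real.sqrt (M j) / ∑ p, Real.sqrt (M p)⌉₊ : ℝ) ^ 2)
      < (1 / 12) * ((b - a) ^ 3 / (N : ℝ) ^ 2) * Mmax := by
  have hN : 0 < N := lt_of_lt_of_le hk hkN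
  have hNR : (0:ℝ) < N := by exact_mod_cast hN
  have hkR : (0:ℝ) < k := by exact_mod_cast hk
  set l : ℝ := (b - a) / k with hl
  have hlpos : 0 < l := div_pos (by linarith) hkR
  set S : ℝ := ∑ p, Real.sqrt (M p) with hS
  have hSpos : 0 < S := by
    apply Finset.sum_pos (fun p _ => Real.sqrt_pos.mpr (hMpos p))
    have : Nonempty (Fin k) := Fin.pos_iff_nonempty.mp hk
    exact Finset.univ_nonempty
  have hMmaxpos : 0 < Mmax := by
    obtain ⟨j⟩ := Fin.pos_iff_nonempty.mp hk
    exact lt_of_lt_of_le (hMpos j) (hMmax.2 ⟨j, rfl⟩)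
  -- termwise bound: M j / n j ^ 2 ≤ S^2 / N^2
  have key : ∀ j : Fin k,
      M j / (⌈(N : ℝ) * Real.sqrt (M j) / S⌉₊ : ℝ) ^ 2 ≤ S ^ 2 / (N:ℝ) ^ 2 := by
    intro j
    have hx : (0:ℝ) < (N : ℝ) * Real.sqrt (M j) / S :=
      div_pos (mul_pos hNR (Real.sqrt_pos.mpr (hMpos j))) hSpos
    have hle : (N : ℝ) * Real.sqrt (M j) / S ≤ (⌈(N : ℝ) * Real.sqrt (M j) / S⌉₊ : ℝ) :=
      Nat.le_ceil _
    have hnpos : (0:ℝ) < (⌈(N : ℝ) * Real.sqrt (M j) / S⌉₊ : ℝ) := lt_of_lt_of_le hx hle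
    rw [div_le_div_iff₀ (by positivity) (by positivity)]
    have hsq : Real.sqrt (M j) ^ 2 = M j := Real.sq_sqrt (hMpos j).le
    have h2 : ((N : ℝ) * Real.sqrt (M j) / S) ^ 2 ≤ ((⌈(N : ℝ) * Real.sqrt (M j) / S⌉₊ : ℝ)) ^ 2 :=
      pow_le_pow_left₀ hx.le hle 2
    have h3 : ((N : ℝ) * Real.sqrt (M j) / S) ^ 2 = (N:ℝ)^2 * M j / S ^ 2 := by
      rw [div_pow, mul_pow, hsq]
    rw [h3] at h2
    rw [div_le_iff₀ (by positivity)] at h2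
    nlinarith [sq_nonneg S]
  -- strict bound S < k * sqrt Mmax
  have hSlt : S < (k:ℝ) * Real.sqrt Mmax := by
    obtain ⟨p, hp⟩ := hvar
    have : S < ∑ _p : Fin k, Real.sqrt Mmax := by
      apply Finset.sum_lt_sum
      · intro i _
        exact Real.sqrt_le_sqrt (hMmax.2 ⟨i, rfl⟩)
      · exact ⟨p, Finset.mem_univ p, Real.sqrt_lt_sqrt (hMpos p).le hp⟩
    simpa [Finset.card_univ, mul_comm] using this
  have hS2 : S ^ 2 < (k:ℝ) ^ 2 * Mmax := by
    have h := mul_self_lt_mul_self hSpos.le hSlt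
    have : Real.sqrt Mmax * Real.sqrt Mmax = Mmax := Real.mul_self_sqrt hMmaxpos.le
    nlinarith
  calc ∑ j : Fin k, (l ^ 3 / 12) * (M j / (⌈(N : ℝ) * Real.sqrt (M j) / S⌉₊ : ℝ) ^ 2)
      ≤ ∑ _j : Fin k, (l ^ 3 / 12) * (S ^ 2 / (N:ℝ) ^ 2) := by
        apply Finset.sum_le_sum
        intro j _
        exact mul_le_mul_of_nonneg_left (key j) (by positivity)
    _ = (k:ℝ) * ((l ^ 3 / 12) * (S ^ 2 / (N:ℝ) ^ 2)) := by
        simp [Finset.card_univ, mul_comm]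
    _ < (k:ℝ) * ((l ^ 3 / 12) * (((k:ℝ) ^ 2 * Mmax) / (N:ℝ) ^ 2)) := by
        gcongr
    _ = (1 / 12) * ((b - a) ^ 3 / (N : ℝ) ^ 2) * Mmax := by
        have : (k:ℝ) * l = b - a := by rw [hl]; field_simp [hkR.ne']
        have hba : (b - a) ^ 3 = (k:ℝ)^3 * l^3 := by rw [← this]; ring
        rw [hba]; ring
end

section
/- Let k ≥ 1 and N ≥ 1 be natural numbers with k ≤ N, let M₁, …, M_k be positive real numbers, and set M = max_{1 ≤ j ≤ k} Mⱼ and nⱼ = ⌈N·√(Mⱼ)/∑_{p=1}^{k} √(M_p)⌉. Then ∑_{j=1}^{k} Mⱼ/nⱼ² ≤ ∑_{j=1}^{k} (1/N²)·(∑_{p=1}^{k} √(M_p)/√(Mⱼ))²·Mⱼ ≤ (k³/N²)·M. -/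
/-- The algebraic chain of inequalities at the heart of Theorem 1: with
`nⱼ = ⌈N √(Mⱼ)/∑ₚ √(Mₚ)⌉` and `M = maxⱼ Mⱼ`,
`∑ⱼ Mⱼ/nⱼ² ≤ ∑ⱼ (1/N²)(∑ₚ √(Mₚ)/√(Mⱼ))² Mⱼ ≤ (k³/N²) M`. -/
theorem refined_bound_algebraic_chain
    (k N : ℕ) (hk : 1 ≤ k) (hN : 1 ≤ N) (hkN : k ≤ N)
    (M : Fin k → ℝ) (hM : ∀ j, 0 < M j)
    (Mmax : ℝ) (hMmax : IsGreatest (Set.range M) Mmax) :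
    (∑ j : Fin k,
        M j / (⌈(N : ℝ) * Real.sqrt (M j) / ∑ p, Real.sqrt (M p)⌉₊ : ℝ) ^ 2
      ≤ ∑ j : Fin k,
        (1 / (N : ℝ) ^ 2) * ((∑ p, Real.sqrt (M p)) / Real.sqrt (M j)) ^ 2 * M j) ∧
    (∑ j : Fin k,
        (1 / (N : ℝ) ^ 2) * ((∑ p, Real.sqrt (M p)) / Real.sqrt (M j)) ^ 2 * M j
      ≤ ((k : ℝ) ^ 3 / (N : ℝ) ^ 2) * Mmax) := by
  have hne : (Finset.univ : Finset (Fin k)).Nonempty := by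
    simpa [Finset.univ_nonempty_iff] using Fin.pos_iff_nonempty.mp hk
  set S : ℝ := ∑ p, Real.sqrt (M p) with hSdef
  have hS : 0 < S :=
    Finset.sum_pos (fun p _ => Real.sqrt_pos.mpr (hM p)) hne
  have hNpos : (0:ℝ) < N := by exact_mod_cast hN
  have hterm : ∀ j : Fin k,
      (1 / (N : ℝ) ^ 2) * (S / Real.sqrt (M j)) ^ 2 * M j = S ^ 2 / N ^ 2 := by
    intro j
    have hsj : (0:ℝ) < Real.sqrt (M j) := Real.sqrt_pos.mpr (hM j)
    have hsq : Real.sqrt (M j) ^ 2 = M j := Real.sq_sqrt (hM j).le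
    field_simp
    rw [hsq]
  constructor
  · apply Finset.sum_le_sum
    intro j _
    have hsj : (0:ℝ) < Real.sqrt (M j) := Real.sqrt_pos.mpr (hM j)
    have hx : (0:ℝ) < (N : ℝ) * Real.sqrt (M j) / S := by positivity
    have hceil : (N : ℝ) * Real.sqrt (M j) / S
        ≤ (⌈(N : ℝ) * Real.sqrt (M j) / S⌉₊ : ℝ) := Nat.le_ceil _
    have h1 : M j / (⌈(N : ℝ) * Real.sqrt (M j) / S⌉₊ : ℝ) ^ 2
        ≤ M j / ((N : ℝ) * Real.sqrt (M j) / S) ^ 2 := by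
      apply div_le_div_of_nonneg_left (hM j).le (by positivity)
      exact pow_le_pow_left₀ hx.le hceil 2
    refine h1.trans_eq ?_
    rw [hterm j]
    have hsq : Real.sqrt (M j) ^ 2 = M j := Real.sq_sqrt (hM j).le
    field_simp
    rw [hsq]
  · have hSle : S ≤ (k : ℝ) * Real.sqrt Mmax := by
      calc S ≤ ∑ _p : Fin k, Real.sqrt Mmax := by
              apply Finset.sum_le_sum
              intro p _
              exact Real.sqrt_le_sqrt (hMmax.2 ⟨p, rfl⟩)
        _ = (k : ℝ) * Real.sqrt Mmax := by simp [mul_comm]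
    have hMmax0 : 0 < Mmax := by
      obtain ⟨x, hx⟩ := hMmax.1
      exact hx ▸ hM x
    have hS2 : S ^ 2 ≤ (k : ℝ) ^ 2 * Mmax := by
      have := mul_self_le_mul_self hS.le hSle
      calc S ^ 2 = S * S := sq S
        _ ≤ ((k : ℝ) * Real.sqrt Mmax) * ((k : ℝ) * Real.sqrt Mmax) := this
        _ = (k : ℝ) ^ 2 * (Real.sqrt Mmax * Real.sqrt Mmax) := by ring
        _ = (k : ℝ) ^ 2 * Mmax := by
              rw [Real.mul_self_sqrt hMmax0.le]
    calc ∑ j : Fin k, (1 / (N : ℝ) ^ 2) * (S / Real.sqrt (M j)) ^ 2 * M j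
        = ∑ _j : Fin k, S ^ 2 / N ^ 2 := by
          exact Finset.sum_congr rfl fun j _ => hterm j
      _ = (k : ℝ) * (S ^ 2 / N ^ 2) := by simp [mul_comm]
      _ ≤ (k : ℝ) * ((k : ℝ) ^ 2 * Mmax / N ^ 2) := by
          apply mul_le_mul_of_nonneg_left _ (by positivity)
          exact div_le_div_of_nonneg_right hS2 (by positivity)
      _ = ((k : ℝ) ^ 3 / (N : ℝ) ^ 2) * Mmax := by ring
end
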